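/- (Clement's theorem) Let p be a natural number with p > 1. Then p and p+2 are both prime if and only if p·(p+2) divides 4·((p−1)! + 1) + p, the expression being interpreted in the integers. -/
import Mathlib

/-- Wilson's theorem in integer-divisibility form. -/
lemma wilson_int (n : ℕ) (hn : 1 < n) : n.Prime ↔ (n : ℤ) ∣ ((n - 1).factorial : ℤ) + 1 := by
  rw [Nat.prime_iff_fac_equiv_neg_one hn.ne',
    ← ZMod.intCast_zmod_eq_zero_iff_dvd]
  push_cast
  constructor
  · intro h; rw [h]; ring
  · intro h; linear_combination h

theorem clement_theorem (p : ℕ) (hp : 1 < p) :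
    (p.Prime ∧ (p + 2).Prime) ↔
      ((p : ℤ) * ((p : ℤ) + 2)) ∣ 4 * (((p - 1).factorial : ℤ) + 1) + (p : ℤ) := by
  rcases Nat.even_or_odd p with hpar | hodd
  · -- p even
    rcases eq_or_ne p 2 with rfl | hne2
    · norm_num [Nat.factorial]
    rcases eq_or_ne p 4 with rfl | hne4
    · norm_num [Nat.factorial]
    -- now p even, p ≥ 6
    obtain ⟨m, rfl⟩ : ∃ m, p = 2 * m := by rcases hpar with ⟨m, hm⟩; exact ⟨m, by omega⟩
    have hm3 : 3 ≤ m := by omega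
    have hfac : 2 * m ∣ (2 * m - 1).factorial := by
      have h1 : 2 * m ∣ (m - 1).factorial * m.factorial :=
        mul_dvd_mul (Nat.dvd_factorial (by omega) (by omega))
          (Nat.dvd_factorial (by omega) le_rfl)
      have h2 : (m - 1).factorial * m.factorial ∣ ((m - 1) + m).factorial :=
        Nat.factorial_mul_factorial_dvd_factorial_add _ _
      have h3 : (m - 1) + m = 2 * m - 1 := by omega
      rw [h3] at h2
      exact h1.trans h2
    constructor
    · rintro ⟨h, -⟩
      exact absurd ((Nat.Prime.even_iff h).mp hpar) (by omega)
    · intro h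
      exfalso
      set q : ℕ := 2 * m with hq
      have hpdvd : (q : ℤ) ∣ 4 * (((q - 1).factorial : ℤ) + 1) + (q : ℤ) :=
        (dvd_mul_right _ _).trans h
      have h4 : (q : ℤ) ∣ 4 * (((q - 1).factorial : ℤ) + 1) :=
        (dvd_add_left dvd_rfl).mp hpdvd
      have hF : (q : ℤ) ∣ ((q - 1).factorial : ℤ) := Int.natCast_dvd_natCast.mpr hfac
      have h5 : (q : ℤ) ∣ 4 := by
        have := dvd_sub h4 (hF.mul_left 4)
        simpa [mul_add] using this
      have : (q : ℤ) ≤ 4 := Int.le_of_dvd (by norm_num) h5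
      have : q ≤ 4 := by exact_mod_cast this
      omega
  · -- p odd
    have hp3 : 3 ≤ p := by rcases hodd with ⟨k, rfl⟩; omega
    obtain ⟨k, hk⟩ := hodd
    have h2p : IsCoprime (2 : ℤ) (p : ℤ) := by
      rw [Int.prime_two.coprime_iff_not_dvd]
      intro ⟨c, hc⟩
      omega
    have h2q : IsCoprime (2 : ℤ) ((p : ℤ) + 2) := by
      rw [Int.prime_two.coprime_iff_not_dvd]
      intro ⟨c, hc⟩
      omega
    have hpq : IsCoprime ((p : ℤ)) ((p : ℤ) + 2) := by
      have h := (h2p.symm.add_mul_left_right 1 : IsCoprime (p : ℤ) (2 + (p : ℤ) * 1))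
      simpa [add_comm, mul_one] using h
    set F : ℤ := ((p - 1).factorial : ℤ) with hF
    have hpiff : p.Prime ↔ (p : ℤ) ∣ 4 * (F + 1) + (p : ℤ) := by
      rw [wilson_int p hp]
      constructor
      · intro h
        exact dvd_add (Dvd.dvd.mul_left h 4) dvd_rfl
      · intro h
        have h4 : (p : ℤ) ∣ 4 * (F + 1) := (dvd_add_left dvd_rfl).mp h
        have hc : IsCoprime ((p : ℤ)) (4 : ℤ) := by
          have h44 : ((4:ℤ)) = 2 ^ 2 := by norm_num
          rw [h44]
          exact h2p.symm.pow_right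
        exact hc.dvd_of_dvd_mul_left h4
    have hfac : ((p + 1).factorial : ℤ) = ((p : ℤ) + 1) * (p : ℤ) * F := by
      have h1 : p - 1 + 1 = p := by omega
      have h2 : (p + 1).factorial = (p + 1) * (p * (p - 1).factorial) := by
        conv_lhs => rw [← h1]
        rw [Nat.factorial_succ, Nat.factorial_succ, h1]
      rw [h2, hF]
      push_cast
      ring
    have hqiff : (p + 2).Prime ↔ ((p : ℤ) + 2) ∣ 4 * (F + 1) + (p : ℤ) := by
      rw [wilson_int (p + 2) (by omega)]
      have hq1 : p + 2 - 1 = p + 1 := by omega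
      rw [hq1]
      push_cast [hfac]
      have key : ((p : ℤ) + 1) * (p : ℤ) * F + 1 =
          (2 * F + 1) + ((p : ℤ) + 2) * (((p : ℤ) - 1) * F) := by ring
      have key2 : 4 * (F + 1) + (p : ℤ) = 2 * (2 * F + 1) + ((p : ℤ) + 2) := by ring
      rw [key, key2,
        dvd_add_left (dvd_mul_right ((p:ℤ)+2) (((p:ℤ)-1)*F)),
        dvd_add_left (dvd_rfl : ((p:ℤ)+2) ∣ ((p:ℤ)+2))]
      constructor
      · intro h; exact h.mul_left 2
      · intro h; exact h2q.symm.dvd_of_dvd_mul_left h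
    rw [hpiff, hqiff]
    constructor
    · rintro ⟨h1, h2⟩; exact hpq.mul_dvd h1 h2
    · intro h
      exact ⟨(dvd_mul_right _ _).trans h, (dvd_mul_left _ _).trans h⟩
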